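/- Let S = {z ∈ ℂ : 0 < Im(z) < π} be the horizontal strip, let L ∈ ℝ, and let S_L = {z ∈ S : Re(z) < L}. Suppose u : closure(S_L) → ℝ is continuous, bounded, harmonic on S_L, satisfies u ≥ 0 on S_L, and u ≥ 1 on the vertical segment {z : Re(z) = L, 0 ≤ Im(z) ≤ π}. Then u(z) ≥ e^{Re(z) − L} · sin(Im(z)) for all z ∈ S_L. -/

import Mathlib

/-- `u : ℂ → ℝ` is harmonic on the set `U`: twice continuously differentiable with vanishing
Laplacian `∂²u/∂x² + ∂²u/∂y² = 0` on `U`. -/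
def HarmonicOnSet (u : ℂ → ℝ) (U : Set ℂ) : Prop :=
  ContDiffOn ℝ 2 u U ∧ ∀ z ∈ U,
    fderiv ℝ (fun w => fderiv ℝ u w 1) z 1 +
      fderiv ℝ (fun w => fderiv ℝ u w Complex.I) z Complex.I = 0

open Complex Set Filter Topology Real

/-!
The comparison function `h z = exp (Re z - L) * sin (Im z) = Im (exp (z - L))` is harmonic, vanishes
on `Im z = 0` and `Im z = π`, and is at most `1` on `Re z = L`. Hence on the boundary of the
rectangle `[a, L] × [0, π]` we have `h - exp (a - L) ≤ u`. The weak minimum principle carries this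
inside: `u - h - ε (Re z)²` has Laplacian `-2ε < 0`, so it cannot have an interior minimum, which
gives `h - exp (a - L) ≤ u + ε (a² + L²)`. Let `ε → 0` and then `a → -∞`.
-/

theorem IsLocalMin.deriv_deriv_nonneg {f : ℝ → ℝ} {x : ℝ} (hmin : IsLocalMin f x)
    (hc : ContinuousAt f x) : 0 ≤ deriv (deriv f) x := by
  -- if `f'' x < 0` then `x` is also a local maximum, so `f` is locally constant
  by_contra! hneg
  have hmax := isLocalMax_of_deriv_deriv_neg hneg hmin.deriv_eq_zero hc
  have hconst : f =ᶠ[𝓝 x] fun _ => f x :=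
    (hmin.and hmax).mono fun _ h => le_antisymm h.2 h.1
  have hderiv : deriv f =ᶠ[𝓝 x] fun _ => 0 :=
    hconst.eventuallyEq_nhds.mono fun _ h => h.deriv_eq.trans (deriv_const _ _)
  rw [hderiv.deriv_eq, deriv_const] at hneg
  exact hneg.false

section SecondDerivative

variable {E : Type*} [NormedAddCommGroup E] [NormedSpace ℝ E] {f g : E → ℝ} {z : E}

theorem ContDiffAt.differentiableAt_fderiv_apply (hf : ContDiffAt ℝ 2 f z) (v : E) :
    DifferentiableAt ℝ (fun w => fderiv ℝ f w v) z :=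
  ((hf.fderiv_right (m := 1) le_rfl).differentiableAt one_ne_zero).clm_apply
    (differentiableAt_const v)

theorem IsLocalMin.fderiv_fderiv_apply_nonneg (hf : ContDiffAt ℝ 2 f z) (hmin : IsLocalMin f z)
    (v : E) : 0 ≤ fderiv ℝ (fun w => fderiv ℝ f w v) z v := by
  set γ : ℝ → E := fun t => z + t • v
  have hγ : ∀ t, HasDerivAt γ v t := fun t => by
    simpa only [id_eq, one_smul] using ((hasDerivAt_id t).smul_const v).const_add z
  have hγ0 : γ 0 = z := by simp [γ]
  have hfγ : ∀ᶠ t in 𝓝 0, ContDiffAt ℝ 2 f (γ t) :=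
    (hγ 0).continuousAt.eventually (hγ0 ▸ hf.eventually (by simp))
  have hderiv : deriv (f ∘ γ) =ᶠ[𝓝 0] fun t => fderiv ℝ f (γ t) v :=
    hfγ.mono fun t ht =>
      ((ht.differentiableAt two_ne_zero).hasFDerivAt.comp_hasDerivAt t (hγ t)).deriv
  have hsecond : HasDerivAt (fun t => fderiv ℝ f (γ t) v)
      (fderiv ℝ (fun w => fderiv ℝ f w v) z v) 0 :=
    (hf.differentiableAt_fderiv_apply v).hasFDerivAt.comp_hasDerivAt_of_eq 0 (hγ 0) hγ0.symm
  have hcont : ContinuousAt (f ∘ γ) 0 :=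
    (hγ0 ▸ (hf.differentiableAt two_ne_zero).continuousAt).comp (hγ 0).continuousAt
  calc 0 ≤ deriv (deriv (f ∘ γ)) 0 :=
        (IsLocalMin.comp_continuous (hγ0 ▸ hmin) (hγ 0).continuousAt).deriv_deriv_nonneg hcont
    _ = _ := by rw [hderiv.deriv_eq, hsecond.deriv]

theorem ContDiffAt.fderiv_fderiv_apply_sub (hf : ContDiffAt ℝ 2 f z) (hg : ContDiffAt ℝ 2 g z)
    (v : E) :
    fderiv ℝ (fun w => fderiv ℝ (fun x => f x - g x) w v) z v
      = fderiv ℝ (fun w => fderiv ℝ f w v) z v - fderiv ℝ (fun w => fderiv ℝ g w v) z v := by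
  have hfirst : (fun w => fderiv ℝ (fun x => f x - g x) w v)
      =ᶠ[𝓝 z] fun w => fderiv ℝ f w v - fderiv ℝ g w v :=
    (hf.eventually (by simp)).and (hg.eventually (by simp)) |>.mono fun w hw => by
      dsimp only
      rw [fderiv_fun_sub (hw.1.differentiableAt two_ne_zero) (hw.2.differentiableAt two_ne_zero)]
      rfl
  rw [hfirst.fderiv_eq, fderiv_fun_sub (hf.differentiableAt_fderiv_apply v)
    (hg.differentiableAt_fderiv_apply v)]
  rfl

end SecondDerivative

noncomputable def planeLaplacian (f : ℂ → ℝ) (z : ℂ) : ℝ :=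
  fderiv ℝ (fun w => fderiv ℝ f w 1) z 1 + fderiv ℝ (fun w => fderiv ℝ f w I) z I

section PlaneLaplacian

variable {f g : ℂ → ℝ} {z : ℂ}

theorem IsLocalMin.planeLaplacian_nonneg (hf : ContDiffAt ℝ 2 f z) (hmin : IsLocalMin f z) :
    0 ≤ planeLaplacian f z :=
  add_nonneg (hmin.fderiv_fderiv_apply_nonneg hf 1) (hmin.fderiv_fderiv_apply_nonneg hf I)

theorem ContDiffAt.planeLaplacian_sub (hf : ContDiffAt ℝ 2 f z) (hg : ContDiffAt ℝ 2 g z) :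
    planeLaplacian (fun x => f x - g x) z = planeLaplacian f z - planeLaplacian g z := by
  simp only [planeLaplacian, hf.fderiv_fderiv_apply_sub hg]
  ring

theorem HarmonicOnSet.mono {U V : Set ℂ} (hf : HarmonicOnSet f U) (hVU : V ⊆ U) :
    HarmonicOnSet f V :=
  ⟨hf.1.mono hVU, fun z hz => hf.2 z (hVU hz)⟩

theorem HarmonicOnSet.planeLaplacian_eq_zero {U : Set ℂ} (hf : HarmonicOnSet f U) (hz : z ∈ U) :
    planeLaplacian f z = 0 :=
  hf.2 z hz

theorem IsCompact.exists_isMinOn_mem_diff_of_planeLaplacian_neg {K U : Set ℂ} (hK : IsCompact K)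
    (hKne : K.Nonempty) (hU : IsOpen U) (hUK : U ⊆ K) (hcont : ContinuousOn g K)
    (hg : ContDiffOn ℝ 2 g U) (hlap : ∀ z ∈ U, planeLaplacian g z < 0) :
    ∃ x ∈ K \ U, IsMinOn g K x := by
  obtain ⟨x, hxK, hmin⟩ := hK.exists_isMinOn hKne hcont
  refine ⟨x, ⟨hxK, fun hxU => ?_⟩, hmin⟩
  have hxU' : U ∈ 𝓝 x := hU.mem_nhds hxU
  exact (hlap x hxU).not_ge <|
    (hmin.isLocalMin (mem_of_superset hxU' hUK)).planeLaplacian_nonneg (hg.contDiffAt hxU')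

end PlaneLaplacian

section Barrier

variable (L ε : ℝ)

theorem hasFDerivAt_exp_re_mul_sin_im (w : ℂ) :
    HasFDerivAt (fun w : ℂ => Real.exp (w.re - L) * Real.sin w.im)
      ((Real.exp (w.re - L) * Real.sin w.im) • reCLM
        + (Real.exp (w.re - L) * Real.cos w.im) • imCLM) w := by
  refine ((reCLM.hasFDerivAt.sub_const L).exp.fun_mul imCLM.hasFDerivAt.sin).congr_fderiv ?_
  ext; simp; ring

theorem hasFDerivAt_exp_re_mul_cos_im (w : ℂ) :
    HasFDerivAt (fun w : ℂ => Real.exp (w.re - L) * Real.cos w.im)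
      ((Real.exp (w.re - L) * Real.cos w.im) • reCLM
        - (Real.exp (w.re - L) * Real.sin w.im) • imCLM) w := by
  refine ((reCLM.hasFDerivAt.sub_const L).exp.fun_mul imCLM.hasFDerivAt.cos).congr_fderiv ?_
  ext; simp; ring

noncomputable def barrier (w : ℂ) : ℝ :=
  Real.exp (w.re - L) * Real.sin w.im + ε * w.re ^ 2

theorem hasFDerivAt_barrier (w : ℂ) :
    HasFDerivAt (barrier L ε)
      ((Real.exp (w.re - L) * Real.sin w.im + 2 * ε * w.re) • reCLM
        + (Real.exp (w.re - L) * Real.cos w.im) • imCLM) w := by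
  refine ((hasFDerivAt_exp_re_mul_sin_im L w).fun_add
    ((reCLM.hasFDerivAt.pow 2).const_mul ε)).congr_fderiv ?_
  ext; simp; ring

theorem contDiff_barrier : ContDiff ℝ 2 (barrier L ε) :=
  ((Real.contDiff_exp.comp (reCLM.contDiff.sub contDiff_const)).mul
    (Real.contDiff_sin.comp imCLM.contDiff)).add (contDiff_const.mul (reCLM.contDiff.pow 2))

theorem planeLaplacian_barrier (z : ℂ) : planeLaplacian (barrier L ε) z = 2 * ε := by
  have hx : (fun w => fderiv ℝ (barrier L ε) w 1)
      = fun w => Real.exp (w.re - L) * Real.sin w.im + 2 * ε * w.re := by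
    ext w; simp [(hasFDerivAt_barrier L ε w).fderiv]
  have hy : (fun w => fderiv ℝ (barrier L ε) w I)
      = fun w => Real.exp (w.re - L) * Real.cos w.im := by
    ext w; simp [(hasFDerivAt_barrier L ε w).fderiv]
  have hxx : HasFDerivAt (fun w : ℂ => Real.exp (w.re - L) * Real.sin w.im + 2 * ε * w.re)
      ((Real.exp (z.re - L) * Real.sin z.im) • reCLM
        + (Real.exp (z.re - L) * Real.cos z.im) • imCLM + (2 * ε) • reCLM) z :=
    (hasFDerivAt_exp_re_mul_sin_im L z).fun_add (reCLM.hasFDerivAt.const_mul (2 * ε))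
  rw [planeLaplacian, hx, hy, hxx.fderiv, (hasFDerivAt_exp_re_mul_cos_im L z).fderiv]
  simp

end Barrier

section Rectangle

variable {a L : ℝ} {u : ℂ → ℝ}

theorem exp_re_mul_sin_im_sub_le_of_mem_rectangle_boundary {x : ℂ}
    (hx : x ∈ Icc a L ×ℂ Icc 0 π \ Ioo a L ×ℂ Ioo 0 π) (hnn : 0 ≤ u x)
    (hright : x.re = L → 1 ≤ u x) :
    Real.exp (x.re - L) * Real.sin x.im - Real.exp (a - L) ≤ u x := by
  obtain ⟨⟨⟨hax, hxL⟩, him0, himπ⟩, hinterior⟩ := hx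
  have hsin := Real.sin_le_one x.im
  rcases hax.eq_or_lt with rfl | hax
  · nlinarith [Real.exp_pos (x.re - L)]
  rcases hxL.eq_or_lt with hxL | hxL
  · rw [hxL, sub_self, Real.exp_zero, one_mul]
    linarith [hright hxL, Real.exp_pos (a - L)]
  have hsin0 : Real.sin x.im = 0 := by
    rcases him0.eq_or_lt with h0 | h0
    · rw [← h0, Real.sin_zero]
    rcases himπ.eq_or_lt with hπ | hπ
    · rw [hπ, Real.sin_pi]
    exact absurd ⟨⟨hax, hxL⟩, h0, hπ⟩ hinterior
  rw [hsin0, mul_zero, zero_sub]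
  linarith [Real.exp_pos (a - L)]

theorem exp_re_mul_sin_im_sub_le_of_mem_rectangle (hcont : ContinuousOn u (Icc a L ×ℂ Icc 0 π))
    (hharm : HarmonicOnSet u (Ioo a L ×ℂ Ioo 0 π))
    (hnn : ∀ x ∈ Icc a L ×ℂ Icc 0 π \ Ioo a L ×ℂ Ioo 0 π, 0 ≤ u x)
    (hright : ∀ x ∈ Icc a L ×ℂ Icc 0 π, x.re = L → 1 ≤ u x) {z : ℂ}
    (hz : z ∈ Icc a L ×ℂ Icc 0 π) :
    Real.exp (z.re - L) * Real.sin z.im - Real.exp (a - L) ≤ u z := by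
  suffices h : ∀ ε > 0, Real.exp (z.re - L) * Real.sin z.im - Real.exp (a - L)
      ≤ u z + ε * (a ^ 2 + L ^ 2) by
    have hlim : Tendsto (fun ε => u z + ε * (a ^ 2 + L ^ 2)) (𝓝[>] 0) (𝓝 (u z)) := by
      have hc : Continuous fun ε : ℝ => u z + ε * (a ^ 2 + L ^ 2) := by fun_prop
      simpa using (hc.tendsto 0).mono_left nhdsWithin_le_nhds
    exact ge_of_tendsto hlim (eventually_nhdsWithin_of_forall h)
  intro ε hε
  have hU : IsOpen (Ioo a L ×ℂ Ioo 0 π) := isOpen_Ioo.reProdIm isOpen_Ioo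
  have hlap : ∀ y ∈ Ioo a L ×ℂ Ioo 0 π, planeLaplacian (fun y => u y - barrier L ε y) y < 0 := by
    intro y hy
    rw [(hharm.1.contDiffAt (hU.mem_nhds hy)).planeLaplacian_sub
      (contDiff_barrier L ε).contDiffAt, hharm.planeLaplacian_eq_zero hy, planeLaplacian_barrier]
    linarith
  obtain ⟨x, hx, hmin⟩ :=
    (isCompact_Icc.reProdIm isCompact_Icc).exists_isMinOn_mem_diff_of_planeLaplacian_neg ⟨z, hz⟩
      hU (fun y hy => ⟨Ioo_subset_Icc_self hy.1, Ioo_subset_Icc_self hy.2⟩)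
      (hcont.sub (contDiff_barrier L ε).continuous.continuousOn)
      (hharm.1.sub (contDiff_barrier L ε).contDiffOn) hlap
  have hboundary :=
    exp_re_mul_sin_im_sub_le_of_mem_rectangle_boundary hx (hnn x hx) (hright x hx.1)
  have hxz : u x - barrier L ε x ≤ u z - barrier L ε z := hmin hz
  have hxre : x.re ^ 2 ≤ a ^ 2 + L ^ 2 := by
    obtain ⟨⟨hax, hxL⟩, -⟩ := hx.1
    rcases le_total 0 x.re with h | h <;> nlinarith
  simp only [barrier] at hxz
  nlinarith [sq_nonneg z.re]

end Rectangle

theorem stmt_8_general (L : ℝ) (u : ℂ → ℝ)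
    (hcont : ContinuousOn u (closure {z : ℂ | 0 < z.im ∧ z.im < Real.pi ∧ z.re < L}))
    (hharm : HarmonicOnSet u {z : ℂ | 0 < z.im ∧ z.im < Real.pi ∧ z.re < L})
    (hnn : ∀ z ∈ {z : ℂ | 0 < z.im ∧ z.im < Real.pi ∧ z.re < L}, 0 ≤ u z)
    (hbc : ∀ z : ℂ, z.re = L → 0 ≤ z.im → z.im ≤ Real.pi → 1 ≤ u z) :
    ∀ z ∈ {z : ℂ | 0 < z.im ∧ z.im < Real.pi ∧ z.re < L},
      Real.exp (z.re - L) * Real.sin z.im ≤ u z := by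
  set S := {z : ℂ | 0 < z.im ∧ z.im < Real.pi ∧ z.re < L}
  have hclosure : closure S = Iic L ×ℂ Icc 0 π := by
    have hS : S = Iio L ×ℂ Ioo 0 π := by
      ext; simp only [S, mem_ofPred_eq, mem_reProdIm, mem_Iio, mem_Ioo]; tauto
    rw [hS, closure_reProdIm, closure_Iio, closure_Ioo pi_pos.ne]
  have hnn' : ∀ x ∈ closure S, 0 ≤ u x := fun x hx =>
    ContinuousWithinAt.closure_le hx continuousWithinAt_const
      ((hcont x hx).mono subset_closure) hnn
  rintro z ⟨him0, himπ, hre⟩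
  have hrect : ∀ a < z.re, Real.exp (z.re - L) * Real.sin z.im - Real.exp (a - L) ≤ u z := by
    intro a ha
    have hKS : Icc a L ×ℂ Icc 0 π ⊆ closure S := hclosure ▸ fun y hy => ⟨hy.1.2, hy.2⟩
    exact exp_re_mul_sin_im_sub_le_of_mem_rectangle (hcont.mono hKS)
      (hharm.mono fun y hy => ⟨hy.2.1, hy.2.2, hy.1.2⟩) (fun x hx => hnn' x (hKS hx.1))
      (fun x hx hxL => hbc x hxL hx.2.1 hx.2.2) ⟨⟨ha.le, hre.le⟩, him0.le, himπ.le⟩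
  have hlim : Tendsto (fun a => u z + Real.exp (a - L)) atBot (𝓝 (u z)) := by
    simpa [sub_eq_add_neg] using tendsto_const_nhds.add
      (Real.tendsto_exp_atBot.comp (tendsto_atBot_add_const_right _ (-L) tendsto_id))
  exact ge_of_tendsto hlim ((eventually_lt_atBot z.re).mono fun a ha => by linarith [hrect a ha])

/-- Let `S = {0 < Im z < π}` be the horizontal strip, `L ∈ ℝ` and
`S_L = {z ∈ S : Re z < L}`.  If `u` is continuous and bounded on the closure of `S_L`,
harmonic and nonnegative on `S_L`, and `u ≥ 1` on the vertical segment
`{Re z = L, 0 ≤ Im z ≤ π}`, then `u(z) ≥ e^{Re z − L} sin(Im z)` for all `z ∈ S_L`. -/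
theorem stmt_8 (L : ℝ) (u : ℂ → ℝ)
    (hcont : ContinuousOn u (closure {z : ℂ | 0 < z.im ∧ z.im < Real.pi ∧ z.re < L}))
    (hbdd : ∃ M : ℝ, ∀ z ∈ closure {z : ℂ | 0 < z.im ∧ z.im < Real.pi ∧ z.re < L}, |u z| ≤ M)
    (hharm : HarmonicOnSet u {z : ℂ | 0 < z.im ∧ z.im < Real.pi ∧ z.re < L})
    (hnn : ∀ z ∈ {z : ℂ | 0 < z.im ∧ z.im < Real.pi ∧ z.re < L}, 0 ≤ u z)
    (hbc : ∀ z : ℂ, z.re = L → 0 ≤ z.im → z.im ≤ Real.pi → 1 ≤ u z) :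
    ∀ z ∈ {z : ℂ | 0 < z.im ∧ z.im < Real.pi ∧ z.re < L},
      Real.exp (z.re - L) * Real.sin z.im ≤ u z :=
  stmt_8_general L u hcont hharm hnn hbc
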